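/- The maximum of det B(A₇, x, y, 1) over all vectors x, y ∈ {0, 1}⁷, where A₇ is the upper-left 7 × 7 submatrix of A₁₅, equals 40, and this maximum is attained by the bordering that yields A₈ (the upper-left 8 × 8 submatrix of A₁₅). -/

import Mathlib

open Matrix

/-- The bordered matrix `B(A, x, y, z)`: upper-left `n × n` block `A`, first `n` entries of the
last column given by `y`, first `n` entries of the last row given by `x`, corner entry `z`. -/
def border {n : ℕ} (A : Matrix (Fin n) (Fin n) ℤ) (x y : Fin n → ℤ) (z : ℤ) :
    Matrix (Fin (n + 1)) (Fin (n + 1)) ℤ :=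
  Matrix.of fun i j =>
    if hi : (i : ℕ) < n then
      if hj : (j : ℕ) < n then A ⟨i, hi⟩ ⟨j, hj⟩ else y ⟨i, hi⟩
    else
      if hj : (j : ℕ) < n then x ⟨j, hj⟩ else z

/-- The matrix `A₁₅` from the paper. -/
def A15 : Matrix (Fin 15) (Fin 15) ℤ :=
  !![1, 0, 1, 1, 0, 0, 0, 0, 0, 0, 1, 0, 0, 1, 1;
      1, 1, 0, 0, 0, 1, 0, 1, 1, 1, 1, 0, 0, 0, 0;
      0, 1, 1, 0, 1, 0, 0, 1, 0, 0, 1, 1, 0, 1, 0;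
      0, 1, 0, 1, 1, 1, 0, 0, 0, 0, 0, 0, 1, 0, 1;
      1, 0, 0, 0, 1, 1, 1, 1, 0, 0, 0, 0, 0, 1, 0;
      0, 0, 1, 0, 0, 1, 1, 0, 1, 0, 0, 0, 1, 1, 0;
      0, 1, 0, 1, 0, 0, 1, 1, 0, 0, 1, 0, 1, 1, 0;
      0, 0, 1, 1, 0, 1, 0, 1, 0, 1, 0, 1, 1, 0, 0;
      0, 0, 0, 1, 1, 0, 0, 1, 1, 1, 0, 0, 0, 1, 1;
      1, 1, 1, 0, 1, 0, 1, 0, 0, 1, 0, 0, 1, 0, 0;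
      0, 0, 0, 0, 1, 1, 1, 0, 0, 1, 1, 1, 0, 0, 1;
      1, 1, 0, 1, 0, 0, 1, 0, 1, 0, 0, 1, 0, 0, 0;
      1, 0, 0, 0, 1, 0, 0, 1, 1, 0, 1, 1, 1, 0, 1;
      1, 1, 0, 0, 0, 1, 0, 0, 0, 1, 0, 1, 1, 1, 1;
      0, 1, 1, 0, 0, 0, 1, 1, 0, 0, 0, 0, 0, 0, 1]

/-- `Asub k h` is the upper-left `k × k` submatrix `A_k` of `A₁₅`. -/
def Asub (k : ℕ) (h : k ≤ 15) : Matrix (Fin k) (Fin k) ℤ :=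
  A15.submatrix (Fin.castLE h) (Fin.castLE h)

/-!
Since `det A₇ = 18 ≠ 0`, expanding the bordered determinant with the adjugate gives
`det B(A₇, x, y, 1) = 18 - xᵀ adj(A₇) y`, so the maximum is `18` minus the minimum of the bilinear
form `xᵀ adj(A₇) y` over binary `x, y`. For fixed `y` the best `x` selects exactly the negative
entries of `adj(A₇) y`, so that minimum is the least sum of negative entries over the `2⁷` binary
vectors `y`, which is `-22`; the row and column of `A₁₅` bordering `A₇` to `A₈` attain it.
-/

lemma border_eq_reindex_fromBlocks {n : ℕ} (A : Matrix (Fin n) (Fin n) ℤ) (x y : Fin n → ℤ)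
    (z : ℤ) :
    border A x y z = reindex finSumFinEquiv finSumFinEquiv
      (fromBlocks A (replicateCol (Fin 1) y) (replicateRow (Fin 1) x) (of fun _ _ => z)) := by
  ext i j
  induction i using Fin.addCases <;> induction j using Fin.addCases <;> simp [border]

/-- Clearing the last column with the adjugate turns the bordered matrix block lower triangular,
at the cost of a factor `det A`. -/
lemma det_border {n : ℕ} (A : Matrix (Fin n) (Fin n) ℤ) (hA : A.det ≠ 0) (x y : Fin n → ℤ)
    (z : ℤ) :
    (border A x y z).det = z * A.det - x ⬝ᵥ (adjugate A *ᵥ y) := by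
  have hBM : fromBlocks A (replicateCol (Fin 1) y) (replicateRow (Fin 1) x) (of fun _ _ => z) *
      fromBlocks 1 (replicateCol (Fin 1) (-(adjugate A *ᵥ y))) 0 (of fun _ _ => A.det) =
      fromBlocks A 0 (replicateRow (Fin 1) x)
        (of fun _ _ => z * A.det - x ⬝ᵥ (adjugate A *ᵥ y)) := by
    rw [fromBlocks_multiply]
    congr 1
    · simp
    · ext i j
      simp [← replicateCol_mulVec, mulVec_neg, mulVec_mulVec, mul_adjugate, mul_apply, mul_comm]
    · simp
    · ext i j
      rw [Matrix.add_apply, replicateRow_mul_replicateCol_apply, dotProduct_neg, mul_apply,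
        Fin.sum_univ_one, of_apply, of_apply, of_apply]
      ring
  have hdet := congrArg det hBM
  rw [det_mul, det_fromBlocks_zero₂₁, det_fromBlocks_zero₁₂] at hdet
  simp only [det_one, det_unique, of_apply, one_mul] at hdet
  rw [border_eq_reindex_fromBlocks, det_reindex_self]
  exact mul_right_cancel₀ hA (by rw [hdet]; ring)

lemma adjugate_eq_of_mul_eq_smul {ι R : Type*} [Fintype ι] [DecidableEq ι] [CommRing R]
    [IsDomain R] {A N : Matrix ι ι R} (hA : A.det ≠ 0) (h : A * N = A.det • 1) :
    adjugate A = N := by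
  refine smul_right_injective _ hA ?_
  calc A.det • adjugate A = adjugate A * (A * N) := by rw [h, Matrix.mul_smul, Matrix.mul_one]
    _ = A.det • N := by rw [← Matrix.mul_assoc, adjugate_mul, smul_mul, Matrix.one_mul]

lemma submatrix_castLE_succ_eq_border {m k : ℕ} (M : Matrix (Fin m) (Fin m) ℤ) (h : k < m) :
    M.submatrix (Fin.castLE h) (Fin.castLE h) =
      border (M.submatrix (Fin.castLE h.le) (Fin.castLE h.le))
        (fun j => M ⟨k, h⟩ (Fin.castLE h.le j)) (fun i => M (Fin.castLE h.le i) ⟨k, h⟩)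
        (M ⟨k, h⟩ ⟨k, h⟩) := by
  ext i j
  induction i using Fin.lastCases <;> induction j using Fin.lastCases <;> simp [border, Fin.castLE]

lemma sum_min_zero_le_dotProduct {ι R : Type*} [Fintype ι] [Semiring R] [LinearOrder R]
    [IsOrderedAddMonoid R] {x : ι → R} (hx : ∀ i, x i = 0 ∨ x i = 1) (v : ι → R) :
    ∑ i, min 0 (v i) ≤ x ⬝ᵥ v := by
  refine Finset.sum_le_sum fun i _ => ?_
  rcases hx i with h | h <;> simp [h]

def adjA7 : Matrix (Fin 7) (Fin 7) ℤ :=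
  !![6,6,0,-6,6,-6,0; -4,8,6,-2,-4,-2,6; 5,-1,6,-2,-4,7,-3; 7,-5,-6,8,-2,-1,3;
     -1,-7,6,4,8,-5,-3; -2,4,-6,8,-2,8,-6; -3,-3,0,-6,6,3,9]

lemma Asub_seven_eq : Asub 7 (by norm_num) =
    !![1,0,1,1,0,0,0; 1,1,0,0,0,1,0; 0,1,1,0,1,0,0; 0,1,0,1,1,1,0;
      1,0,0,0,1,1,1; 0,0,1,0,0,1,1; 0,1,0,1,0,0,1] := by
  decide

lemma det_Asub_seven : (Asub 7 (by norm_num)).det = 18 := by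
  rw [Asub_seven_eq]
  simp [det_succ_row_zero, Fin.sum_univ_succ, Fin.succAbove]

lemma adjugate_Asub_seven : adjugate (Asub 7 (by norm_num)) = adjA7 :=
  adjugate_eq_of_mul_eq_smul (by rw [det_Asub_seven]; decide) (by rw [det_Asub_seven]; decide)

lemma det_border_Asub_seven (x y : Fin 7 → ℤ) :
    (border (Asub 7 (by norm_num)) x y 1).det = 18 - x ⬝ᵥ (adjA7 *ᵥ y) := by
  rw [det_border _ (by rw [det_Asub_seven]; decide), det_Asub_seven, adjugate_Asub_seven, one_mul]

set_option maxRecDepth 100000 in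
lemma le_sum_min_zero_adjA7_mulVec (b : Fin 7 → Bool) :
    -22 ≤ ∑ i, min 0 ((adjA7 *ᵥ fun j => if b j then 1 else 0) i) := by
  revert b
  decide

lemma le_dotProduct_adjA7_mulVec {x y : Fin 7 → ℤ} (hx : ∀ i, x i = 0 ∨ x i = 1)
    (hy : ∀ i, y i = 0 ∨ y i = 1) : -22 ≤ x ⬝ᵥ (adjA7 *ᵥ y) := by
  obtain ⟨b, rfl⟩ : ∃ b : Fin 7 → Bool, y = fun j => if b j then 1 else 0 :=
    ⟨fun j => y j = 1, funext fun j => by rcases hy j with h | h <;> simp [h]⟩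
  calc -22 ≤ ∑ i, min 0 ((adjA7 *ᵥ fun j => if b j then 1 else 0) i) :=
        le_sum_min_zero_adjA7_mulVec b
    _ ≤ _ := sum_min_zero_le_dotProduct hx _

/-- The maximum of `det B(A_7, x, y, 1)` over `x, y ∈ {0, 1}^7` equals `40`, and it is
attained by the bordering of `A_7` that yields `A_8`. -/
theorem border_max_7 :
    IsGreatest {d : ℤ | ∃ x y : Fin 7 → ℤ,
        (∀ i, x i = 0 ∨ x i = 1) ∧ (∀ i, y i = 0 ∨ y i = 1) ∧
        d = (border (Asub 7 (by norm_num)) x y 1).det} 40 ∧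
    border (Asub 7 (by norm_num))
        (fun j => A15 ⟨7, by norm_num⟩ (Fin.castLE (by norm_num) j))
        (fun i => A15 (Fin.castLE (by norm_num) i) ⟨7, by norm_num⟩) 1
      = Asub 8 (by norm_num) ∧
    (Asub 8 (by norm_num)).det = 40 := by
  have hA8 : border (Asub 7 (by norm_num))
      (fun j => A15 ⟨7, by norm_num⟩ (Fin.castLE (by norm_num) j))
      (fun i => A15 (Fin.castLE (by norm_num) i) ⟨7, by norm_num⟩) 1 = Asub 8 (by norm_num) := by
    have h := submatrix_castLE_succ_eq_border A15 (k := 7) (by norm_num)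
    rw [show A15 ⟨7, _⟩ ⟨7, _⟩ = 1 from rfl] at h
    exact h.symm
  have hdet8 : (Asub 8 (by norm_num)).det = 40 := by
    rw [← hA8, det_border_Asub_seven]
    decide
  refine ⟨⟨⟨_, _, ?_, ?_, ((congrArg det hA8).trans hdet8).symm⟩, ?_⟩, hA8, hdet8⟩
  · decide
  · decide
  rintro d ⟨x, y, hx, hy, rfl⟩
  linarith [det_border_Asub_seven x y, le_dotProduct_adjA7_mulVec hx hy]
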